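/- arXiv:2411.04445 — 3 statements merged into one kernel-verified Lean document; each statement's English description precedes it below -/
import Mathlib

section
/- Let q = pⁿ and k a positive integer with gcd(k,n) = h. For any a, b ∈ F_q, the polynomial x^{p^k} − ax − b has either 0, 1, or p^h zeros in F_q. -/
open Finset Polynomial

/-!
The map `x ↦ x ^ p ^ k - a * x` is additive, so its fibre over `b` is either empty or a translate
of its kernel `K = {x | x ^ p ^ k = a * x}`. Either `K = {0}`, or `K` contains some `c ≠ 0` and then
`K = c • {u | u ^ p ^ k = u}`. Since every `u ∈ F` satisfies `u ^ p ^ n = u`, the condition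
`u ^ p ^ k = u` is equivalent to `u ^ p ^ h = u` with `h = gcd(k, n)`, and `X ^ p ^ h - X` is separable
and divides `X ^ p ^ n - X`, which splits over `F`; so it has exactly `p ^ h` roots in `F`.
-/

section ExpChar

variable {R : Type*} [CommRing R] (p : ℕ) [ExpChar R p]

theorem sub_dvd_pow_pow_sub_of_dvd (y : R) {m n : ℕ} (hmn : m ∣ n) :
    y ^ p ^ m - y ∣ y ^ p ^ n - y := by
  obtain ⟨t, rfl⟩ := hmn
  induction t with
  | zero => simp
  | succ t ih =>
    have key : y ^ p ^ (m * (t + 1)) - y = (y ^ p ^ (m * t) - y) ^ p ^ m + (y ^ p ^ m - y) := by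
      rw [sub_pow_expChar_pow, ← pow_mul, ← pow_add, mul_add_one]
      ring
    rw [key]
    exact dvd_add (dvd_pow ih (expChar_pow_pos R p m).ne') dvd_rfl

theorem card_filter_pow_pow_sub_mul_sub_eq_zero_or [Fintype R] [DecidableEq R] (k : ℕ) (a b : R) :
    #{x | x ^ p ^ k - a * x - b = 0} = 0 ∨
      #{x | x ^ p ^ k - a * x - b = 0} = #{x | x ^ p ^ k = a * x} := by
  let L : R →+ R := (iterateFrobenius R p k).toAddMonoidHom - AddMonoidHom.mulLeft a
  have hL (x : R) : L x = x ^ p ^ k - a * x := rfl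
  have hzeros : #{x | x ^ p ^ k - a * x - b = 0} = #{x | L x = b} := by
    simp only [hL, sub_eq_zero]
  have hker : #{x | x ^ p ^ k = a * x} = #{x | L x = 0} := by
    simp only [hL, sub_eq_zero]
  rw [hzeros, hker]
  by_cases hb : b ∈ Set.range L
  · exact .inr (AddMonoidHom.card_fiber_eq_of_mem_range L hb ⟨0, map_zero L⟩)
  · exact .inl (card_eq_zero.mpr (filter_eq_empty_iff.mpr fun x _ hx => hb ⟨x, hx⟩))

end ExpChar

theorem pow_pow_eq_self_iff_gcd {M : Type*} [Monoid M] {x : M} {p n : ℕ} (hx : x ^ p ^ n = x)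
    (k : ℕ) : x ^ p ^ k = x ↔ x ^ p ^ k.gcd n = x := by
  have hper (m : ℕ) : Function.IsPeriodicPt (· ^ p) m x ↔ x ^ p ^ m = x := by
    rw [Function.IsPeriodicPt, Function.IsFixedPt, pow_iterate]
  simp only [← hper] at hx ⊢
  exact ⟨fun hk => hk.gcd hx, fun h => h.trans_dvd (Nat.gcd_dvd_left k n)⟩

theorem card_filter_pow_pow_eq_mul_eq_card_fixed {M : Type*} [CommGroupWithZero M] [Fintype M]
    [DecidableEq M] {q : ℕ} {a c : M} (hc0 : c ≠ 0) (hc : c ^ q = a * c) :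
    #{x : M | x ^ q = a * x} = #{x : M | x ^ q = x} := by
  refine card_nbij' (· * c⁻¹) (· * c) (fun x hx => ?_) (fun u hu => ?_)
    (fun x _ => inv_mul_cancel_right₀ hc0 x) (fun u _ => mul_inv_cancel_right₀ hc0 u)
  · simp only [coe_filter, mem_univ, true_and, Set.mem_ofPred_eq] at hx ⊢
    have ha : a ≠ 0 := left_ne_zero_of_mul (hc ▸ pow_ne_zero q hc0)
    rw [mul_pow, inv_pow, hx, hc]
    field_simp
  · simp only [coe_filter, mem_univ, true_and, Set.mem_ofPred_eq] at hu ⊢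
    rw [mul_pow, hu, hc, mul_left_comm]

section FiniteField

variable {F : Type*} [Field F] [Fintype F] [DecidableEq F] {p n : ℕ} [Fact p.Prime] [CharP F p]

theorem card_filter_pow_pow_eq_self_of_dvd (hcard : Fintype.card F = p ^ n) {m : ℕ} (hm : m ≠ 0)
    (hmn : m ∣ n) : #{x : F | x ^ p ^ m = x} = p ^ m := by
  have hp1 := (Fact.out : p.Prime).one_lt
  set g : F[X] := X ^ p ^ m - X
  have hsplits : Splits g := by
    refine Splits.of_dvd ?_ (FiniteField.X_pow_card_sub_X_ne_zero F Fintype.one_lt_card)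
      (hcard ▸ sub_dvd_pow_pow_sub_of_dvd p X hmn)
    rw [splits_iff_card_roots, FiniteField.roots_X_pow_card_sub_X,
      FiniteField.X_pow_card_sub_X_natDegree_eq F Fintype.one_lt_card]
    rfl
  have hnodup : g.roots.Nodup :=
    nodup_roots (galois_poly_separable p (p ^ m) (dvd_pow_self p hm))
  calc #{x : F | x ^ p ^ m = x} = #g.roots.toFinset := by
        congr 1; ext x
        simp [g, mem_roots (FiniteField.X_pow_card_pow_sub_X_ne_zero F hm hp1), sub_eq_zero]
    _ = p ^ m := by
      rw [Multiset.toFinset_card_of_nodup hnodup, ← hsplits.natDegree_eq_card_roots,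
        FiniteField.X_pow_card_pow_sub_X_natDegree_eq F hm hp1]

theorem card_filter_pow_pow_eq_mul_mem (hcard : Fintype.card F = p ^ n) (hn : n ≠ 0) (k : ℕ) (a : F) :
    #{x : F | x ^ p ^ k = a * x} ∈ ({1, p ^ k.gcd n} : Set ℕ) := by
  by_cases h : ∃ c ≠ 0, c ^ p ^ k = a * c
  · obtain ⟨c, hc0, hc⟩ := h
    have hfix (x : F) : x ^ p ^ n = x := hcard ▸ FiniteField.pow_card x
    right
    calc #{x : F | x ^ p ^ k = a * x} = #{x : F | x ^ p ^ k = x} :=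
          card_filter_pow_pow_eq_mul_eq_card_fixed hc0 hc
      _ = #{x : F | x ^ p ^ k.gcd n = x} := by
          rw [filter_congr fun x _ => pow_pow_eq_self_iff_gcd (hfix x) k]
      _ = p ^ k.gcd n := card_filter_pow_pow_eq_self_of_dvd hcard (Nat.gcd_ne_zero_right hn)
          (Nat.gcd_dvd_right k n)
  · push Not at h
    left
    rw [card_eq_one]
    refine ⟨0, eq_singleton_iff_unique_mem.mpr ⟨?_, fun x hx => ?_⟩⟩
    · simp [zero_pow (expChar_pow_pos F p k).ne']
    · by_contra hx0
      exact h x hx0 (mem_filter.mp hx).2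

end FiniteField

theorem trinomial_zeros_general (p n k : ℕ) (hp : p.Prime) (hn : 0 < n)
    (F : Type*) [Field F] [Fintype F] [DecidableEq F]
    (hcard : Fintype.card F = p ^ n)
    (a b : F) :
    (univ.filter (fun x : F => x ^ p ^ k - a * x - b = 0)).card ∈
      ({0, 1, p ^ Nat.gcd k n} : Set ℕ) := by
  have : Fact p.Prime := ⟨hp⟩
  have : CharP F p := charP_of_card_eq_prime_pow hcard
  rcases card_filter_pow_pow_sub_mul_sub_eq_zero_or p k a b with h | h
  · exact .inl h
  · exact .inr (h ▸ card_filter_pow_pow_eq_mul_mem hcard hn.ne' k a)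

/-- The trinomial `x^{p^k} - a x - b` has either `0`, `1`, or `p^h` zeros in `F_q`,
where `q = pⁿ` and `h = gcd(k, n)`. -/
theorem trinomial_zeros (p n k : ℕ) (hp : p.Prime) (hn : 0 < n) (hk : 0 < k)
    (F : Type*) [Field F] [Fintype F] [DecidableEq F]
    (hcard : Fintype.card F = p ^ n)
    (a b : F) :
    (univ.filter (fun x : F => x ^ p ^ k - a * x - b = 0)).card ∈
      ({0, 1, p ^ Nat.gcd k n} : Set ℕ) :=
  trinomial_zeros_general p n k hp hn F hcard a b
end

section
/- Let q = pⁿ with p an odd prime, χ₁ the canonical additive character of F_q, α a primitive element of F_q, η the quadratic character, and G = G(η,χ₁) the Gaussian sum. Fix τ with 1 ≤ τ ≤ q−2 and a₁, a₂, b₁, b₂ ∈ F_q with D := b₁ − b₂α^τ − (a₁−a₂α^τ)²/(4(1−α^τ)) ≠ 0. Then ∑_{t=0}^{q−2} ∑_{x∈F_q} χ₁((1−α^τ)α^t x² + (a₁−a₂α^τ)α^t x + (b₁−b₂α^τ)α^t) = G² · η(1−α^τ) · η(D), and in particular this sum has absolute value q. -/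
/-!
Put `A = 1 - α^τ`, `B = a₁ - a₂α^τ`, `C = b₁ - b₂α^τ`, so that `D = C - B²/(4A)`. Since `α`
generates `F_q^*`, `u = α^t` runs over `F_q^*` exactly once. For fixed `u`, completing the square
and counting square roots (`y` has `1 + η(y)` of them) give
`∑ₓ χ₁(Aux² + Bux + Cu) = η(Au) G χ₁(Du)`. Summing over `u`, the twisted Gauss sum
`∑ᵤ η(u) χ₁(Du)` equals `η(D) G` because `η` is quadratic, so the sum is `G² η(A) η(D)`.
Finally `G² = η(-1) q`, which gives the absolute value.
-/

open Finset

theorem sum_range_card_pow_eq_sum {G M : Type*} [Group G] [Fintype G] [AddCommMonoid M] {g : G}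
    (hg : ∀ x : G, x ∈ Subgroup.zpowers g) (f : G → M) :
    ∑ t ∈ range (Nat.card G), f (g ^ t) = ∑ x, f x := by
  classical
  rw [← IsCyclic.image_range_card hg, sum_image]
  intro s hs t ht hst
  rw [coe_range, ← orderOf_eq_card_of_forall_mem_zpowers hg] at hs ht
  exact pow_injOn_Iio_orderOf hs ht hst

theorem sum_units_eq_sum_of_map_zero {G₀ M : Type*} [GroupWithZero G₀] [Fintype G₀]
    [DecidableEq G₀] [AddCommMonoid M] {f : G₀ → M} (hf : f 0 = 0) :
    ∑ u : G₀ˣ, f u = ∑ x, f x := by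
  have hne : ∑ x with x ≠ 0, f x = ∑ x, f x :=
    sum_filter_of_ne fun x _ hx h0 => hx (h0 ▸ hf)
  rw [← hne, sum_subtype (p := (· ≠ 0)) _ (fun x => by simp) f]
  exact Fintype.sum_equiv unitsEquivNeZero _ _ fun _ => rfl

section PrimitiveElement

variable {F : Type*} [Field F] {α : F}

theorem ne_zero_of_forall_exists_pow_eq (hF : ringChar F ≠ 2)
    (hα : ∀ x : F, x ≠ 0 → ∃ m : ℕ, α ^ m = x) : α ≠ 0 := by
  rintro rfl
  -- `-1` is neither `0 ^ (m + 1) = 0` nor `0 ^ 0 = 1`.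
  obtain ⟨m, hm⟩ := hα (-1) (neg_ne_zero.mpr one_ne_zero)
  rcases m.eq_zero_or_pos with rfl | hm0
  · exact Ring.neg_one_ne_one_of_char_ne_two hF (hm.symm.trans (pow_zero _))
  · exact neg_ne_zero.mpr one_ne_zero (by rw [← hm, zero_pow hm0.ne'])

theorem forall_mem_zpowers_mk0 (hα0 : α ≠ 0) (hα : ∀ x : F, x ≠ 0 → ∃ m : ℕ, α ^ m = x)
    (u : Fˣ) : u ∈ Subgroup.zpowers (Units.mk0 α hα0) := by
  obtain ⟨m, hm⟩ := hα u u.ne_zero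
  exact ⟨m, Units.ext (by simp [hm])⟩

variable [Fintype F] [DecidableEq F]

theorem orderOf_eq_card_sub_one_of_forall_exists_pow_eq (hα0 : α ≠ 0)
    (hα : ∀ x : F, x ≠ 0 → ∃ m : ℕ, α ^ m = x) : orderOf α = Fintype.card F - 1 := by
  rw [← Fintype.card_units, ← Nat.card_eq_fintype_card,
    ← orderOf_eq_card_of_forall_mem_zpowers (forall_mem_zpowers_mk0 hα0 hα), ← orderOf_units,
    Units.val_mk0]

theorem sum_range_card_sub_one_pow_eq_sum_units {M : Type*} [AddCommMonoid M] (hα0 : α ≠ 0)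
    (hα : ∀ x : F, x ≠ 0 → ∃ m : ℕ, α ^ m = x) (f : F → M) :
    ∑ t ∈ range (Fintype.card F - 1), f (α ^ t) = ∑ u : Fˣ, f u := by
  rw [← Fintype.card_units, ← Nat.card_eq_fintype_card]
  simpa using sum_range_card_pow_eq_sum (forall_mem_zpowers_mk0 hα0 hα) (fun u => f u)

theorem one_sub_pow_ne_zero_of_forall_exists_pow_eq (hα0 : α ≠ 0)
    (hα : ∀ x : F, x ≠ 0 → ∃ m : ℕ, α ^ m = x) {τ : ℕ} (hτ0 : τ ≠ 0)
    (hτ : τ < Fintype.card F - 1) : 1 - α ^ τ ≠ 0 :=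
  sub_ne_zero.mpr (pow_ne_one_of_lt_orderOf hτ0
    (orderOf_eq_card_sub_one_of_forall_exists_pow_eq hα0 hα ▸ hτ)).symm

end PrimitiveElement

theorem isPrimitive_of_forall_eq_exp_trace {F : Type*} [Field F] [Fintype F] {p : ℕ}
    [Fact p.Prime] [Algebra (ZMod p) F] {ψ : AddChar F ℂ} (hψ : ∀ x : F, ψ x =
      Complex.exp (2 * Real.pi * Complex.I * ((Algebra.trace (ZMod p) F x).val : ℂ) / p)) :
    ψ.IsPrimitive := by
  have hp : p.Prime := Fact.out
  have : Fact (1 < p) := ⟨hp.one_lt⟩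
  refine AddChar.IsPrimitive.of_ne_one (AddChar.ne_one_iff.mpr ?_)
  obtain ⟨b, hb⟩ := Algebra.trace_surjective (ZMod p) F 1
  refine ⟨b, ?_⟩
  rw [hψ, hb, ZMod.val_one, Nat.cast_one, mul_one]
  exact (Complex.isPrimitiveRoot_exp p hp.ne_zero).ne_one hp.one_lt

theorem MulChar.IsQuadratic.gaussSum_mulShift {R R' : Type*} [CommRing R] [Fintype R]
    [CommRing R'] {χ : MulChar R R'} (hχ : χ.IsQuadratic) (ψ : AddChar R R') (a : Rˣ) :
    gaussSum χ (ψ.mulShift a) = χ a * gaussSum χ ψ := by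
  rw [← _root_.gaussSum_mulShift χ ψ a, ← mul_assoc, ← sq, ← MulChar.pow_apply_coe, hχ.sq_eq_one,
    MulChar.one_apply_coe, one_mul]

section QuadraticGaussSum

variable {F R : Type*} [Field F] [Fintype F] [DecidableEq F] [CommRing R] [IsDomain R]

local notation "η" => MulChar.ringHomComp (quadraticChar F) (Int.castRingHom R)

theorem sum_addChar_mul_sq (hF : ringChar F ≠ 2) {ψ : AddChar F R} (hψ : ψ.IsPrimitive)
    {a : F} (ha : a ≠ 0) : ∑ x : F, ψ (a * x ^ 2) = η a * gaussSum η ψ := by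
  have hfiber : ∑ x : F, ψ (a * x ^ 2) = ∑ y : F, (η y + 1) * ψ (a * y) := by
    rw [← sum_fiberwise' univ (· ^ 2) fun y => ψ (a * y)]
    refine sum_congr rfl fun y _ => ?_
    rw [sum_const, nsmul_eq_mul]
    congr 1
    have hsqrts := congrArg (Int.cast : ℤ → R) (quadraticChar_card_sqrts hF y)
    simp only [Set.toFinset_ofPred] at hsqrts
    simpa using hsqrts
  have hflat : ∑ y : F, ψ (a * y) = 0 := by
    simpa [mul_comm a, ha] using AddChar.sum_mulShift a hψ
  have htwisted : ∑ y : F, η y * ψ (a * y) = η a * gaussSum η ψ := by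
    have h := ((quadraticChar_isQuadratic F).comp (Int.castRingHom R)).gaussSum_mulShift ψ
      (Units.mk0 a ha)
    simpa only [Units.val_mk0, gaussSum, AddChar.mulShift_apply] using h
  simp only [hfiber, add_mul, one_mul, sum_add_distrib, hflat, add_zero, htwisted]

theorem sum_addChar_quadratic (hF : ringChar F ≠ 2) {ψ : AddChar F R} (hψ : ψ.IsPrimitive)
    {a : F} (ha : a ≠ 0) (b c : F) :
    ∑ x : F, ψ (a * x ^ 2 + b * x + c) = η a * gaussSum η ψ * ψ (c - b ^ 2 / (4 * a)) := by
  have h2 : (2 : F) ≠ 0 := Ring.two_ne_zero hF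
  have h4 : (4 : F) ≠ 0 := by
    rw [show (4 : F) = 2 * 2 by norm_num]
    exact mul_ne_zero h2 h2
  have hsquare : ∀ x : F,
      a * x ^ 2 + b * x + c = a * (x + b / (2 * a)) ^ 2 + (c - b ^ 2 / (4 * a)) := fun x => by
    field_simp
    ring
  have hshift : ∑ x : F, ψ (a * (x + b / (2 * a)) ^ 2) = ∑ y : F, ψ (a * y ^ 2) :=
    Fintype.sum_equiv (Equiv.addRight _) _ _ fun _ => rfl
  simp_rw [hsquare, AddChar.map_add_eq_mul, ← sum_mul]
  rw [hshift, sum_addChar_mul_sq hF hψ ha]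

theorem sum_units_sum_addChar_quadratic (hF : ringChar F ≠ 2) {ψ : AddChar F R}
    (hψ : ψ.IsPrimitive) {A : F} (hA : A ≠ 0) (B C : F) (hD : C - B ^ 2 / (4 * A) ≠ 0) :
    ∑ u : Fˣ, ∑ x : F, ψ (A * u * x ^ 2 + B * u * x + C * u) =
      gaussSum η ψ ^ 2 * η A * η (C - B ^ 2 / (4 * A)) := by
  set D := C - B ^ 2 / (4 * A)
  calc _ = ∑ u : Fˣ, η A * gaussSum η ψ * (η u * ψ (D * u)) := by
        refine sum_congr rfl fun u _ => ?_
        have hDu : C * u - (B * u) ^ 2 / (4 * (A * u)) = D * u := by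
          simp only [D]
          field_simp
        rw [sum_addChar_quadratic hF hψ (mul_ne_zero hA u.ne_zero), hDu, map_mul]
        ring
    _ = η A * gaussSum η ψ * gaussSum η (ψ.mulShift (Units.mk0 D hD)) := by
        rw [← mul_sum, sum_units_eq_sum_of_map_zero (f := fun x => η x * ψ (D * x))
          (by rw [MulChar.map_zero, zero_mul])]
        simp [gaussSum, AddChar.mulShift_apply]
    _ = gaussSum η ψ ^ 2 * η A * η D := by
        rw [((quadraticChar_isQuadratic F).comp _).gaussSum_mulShift, Units.val_mk0]
        ring

end QuadraticGaussSum

section Complex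

variable {F : Type*} [Field F] [Fintype F] [DecidableEq F]

local notation "η" => MulChar.ringHomComp (quadraticChar F) (Int.castRingHom ℂ)

theorem norm_quadraticChar_ringHomComp {a : F} (ha : a ≠ 0) : ‖η a‖ = 1 := by
  rcases quadraticChar_dichotomy ha with h | h <;> simp [h]

theorem norm_gaussSum_quadraticChar_sq (hF : ringChar F ≠ 2) {ψ : AddChar F ℂ}
    (hψ : ψ.IsPrimitive) : ‖gaussSum η ψ ^ 2‖ = Fintype.card F := by
  rw [gaussSum_sq ((MulChar.ringHomComp_ne_one_iff Int.cast_injective).mpr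
      (quadraticChar_ne_one hF)) ((quadraticChar_isQuadratic F).comp _) hψ, norm_mul,
    norm_quadraticChar_ringHomComp (neg_ne_zero.mpr one_ne_zero), one_mul, Complex.norm_natCast]

end Complex

theorem correlation_sum_nondegenerate_general (p : ℕ) (hp : p.Prime) (hodd : p ≠ 2)
    (F : Type*) [Field F] [Fintype F] [DecidableEq F] [CharP F p] [Algebra (ZMod p) F]
    (χ₁ : AddChar F ℂ)
    (hχ : ∀ x : F, χ₁ x =
      Complex.exp (2 * Real.pi * Complex.I * ((Algebra.trace (ZMod p) F x).val : ℂ) / p))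
    (α : F) (hα : ∀ x : F, x ≠ 0 → ∃ m : ℕ, α ^ m = x)
    (τ : ℕ) (hτ1 : 1 ≤ τ) (hτ2 : τ ≤ Fintype.card F - 2)
    (a₁ a₂ b₁ b₂ : F)
    (D : F) (hDdef : D = b₁ - b₂ * α ^ τ - (a₁ - a₂ * α ^ τ) ^ 2 / (4 * (1 - α ^ τ)))
    (hD : D ≠ 0) :
    (∑ t ∈ range (Fintype.card F - 1), ∑ x : F,
        χ₁ ((1 - α ^ τ) * α ^ t * x ^ 2 + (a₁ - a₂ * α ^ τ) * α ^ t * x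
            + (b₁ - b₂ * α ^ τ) * α ^ t) =
      (gaussSum ((quadraticChar F).ringHomComp (Int.castRingHom ℂ)) χ₁) ^ 2 *
        ((quadraticChar F).ringHomComp (Int.castRingHom ℂ)) (1 - α ^ τ) *
        ((quadraticChar F).ringHomComp (Int.castRingHom ℂ)) D) ∧
    ‖(∑ t ∈ range (Fintype.card F - 1), ∑ x : F,
        χ₁ ((1 - α ^ τ) * α ^ t * x ^ 2 + (a₁ - a₂ * α ^ τ) * α ^ t * x
            + (b₁ - b₂ * α ^ τ) * α ^ t))‖ = (Fintype.card F : ℝ) := by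
  have : Fact p.Prime := ⟨hp⟩
  have hF : ringChar F ≠ 2 := by rwa [ringChar.eq F p]
  have hψ : χ₁.IsPrimitive := isPrimitive_of_forall_eq_exp_trace hχ
  have hα0 : α ≠ 0 := ne_zero_of_forall_exists_pow_eq hF hα
  have hA : 1 - α ^ τ ≠ 0 :=
    one_sub_pow_ne_zero_of_forall_exists_pow_eq hα0 hα (by omega)
      (by have := Fintype.one_lt_card (α := F); omega)
  subst hDdef
  have hsum := sum_units_sum_addChar_quadratic hF hψ hA _ _ hD
  rw [← sum_range_card_sub_one_pow_eq_sum_units hα0 hα (fun u => ∑ x : F,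
    χ₁ ((1 - α ^ τ) * u * x ^ 2 + (a₁ - a₂ * α ^ τ) * u * x + (b₁ - b₂ * α ^ τ) * u))] at hsum
  refine ⟨hsum, ?_⟩
  rw [hsum, norm_mul, norm_mul, norm_gaussSum_quadraticChar_sq hF hψ,
    norm_quadraticChar_ringHomComp hA, norm_quadraticChar_ringHomComp hD, mul_one, mul_one]

/-- Nondegenerate case of the correlation computation: if
`D := b₁ - b₂α^τ - (a₁ - a₂α^τ)²/(4(1 - α^τ)) ≠ 0`, the double character sum
equals `G² η(1 - α^τ) η(D)` and has absolute value `q`. -/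
theorem correlation_sum_nondegenerate (p n : ℕ) (hp : p.Prime) (hodd : p ≠ 2) (hn : 0 < n)
    (F : Type*) [Field F] [Fintype F] [DecidableEq F] [CharP F p] [Algebra (ZMod p) F]
    (hcard : Fintype.card F = p ^ n)
    (χ₁ : AddChar F ℂ)
    (hχ : ∀ x : F, χ₁ x =
      Complex.exp (2 * Real.pi * Complex.I * ((Algebra.trace (ZMod p) F x).val : ℂ) / p))
    (α : F) (hα : ∀ x : F, x ≠ 0 → ∃ m : ℕ, α ^ m = x)
    (τ : ℕ) (hτ1 : 1 ≤ τ) (hτ2 : τ ≤ Fintype.card F - 2)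
    (a₁ a₂ b₁ b₂ : F)
    (D : F) (hDdef : D = b₁ - b₂ * α ^ τ - (a₁ - a₂ * α ^ τ) ^ 2 / (4 * (1 - α ^ τ)))
    (hD : D ≠ 0) :
    (∑ t ∈ range (Fintype.card F - 1), ∑ x : F,
        χ₁ ((1 - α ^ τ) * α ^ t * x ^ 2 + (a₁ - a₂ * α ^ τ) * α ^ t * x
            + (b₁ - b₂ * α ^ τ) * α ^ t) =
      (gaussSum ((quadraticChar F).ringHomComp (Int.castRingHom ℂ)) χ₁) ^ 2 *
        ((quadraticChar F).ringHomComp (Int.castRingHom ℂ)) (1 - α ^ τ) *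
        ((quadraticChar F).ringHomComp (Int.castRingHom ℂ)) D) ∧
    ‖(∑ t ∈ range (Fintype.card F - 1), ∑ x : F,
        χ₁ ((1 - α ^ τ) * α ^ t * x ^ 2 + (a₁ - a₂ * α ^ τ) * α ^ t * x
            + (b₁ - b₂ * α ^ τ) * α ^ t))‖ = (Fintype.card F : ℝ) :=
  correlation_sum_nondegenerate_general p hp hodd F χ₁ hχ α hα τ hτ1 hτ2 a₁ a₂ b₁ b₂ D hDdef hD
end

section
/- Let K ≥ 2, fix q ≥ 2 and consider the family of QCSS parameters (M,K,N,θ) = (q², q, q−1, q). The Welch-type lower bound θ_opt = K·N·√((M/K − 1)/(M·N − 1)) satisfies θ/θ_opt → 1 as q → ∞; i.e., lim_{q→∞} q / (q·√((q−1)³/(q²(q−1)−1))) = 1. -/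
/-!
After cancelling `q`, the ratio is `1 / √r(q)`, where `r = (X - 1)³ / (X²(X - 1) - 1)` is a quotient
of two monic cubics and hence tends to `1`.
-/

open Filter Polynomial Topology

theorem Polynomial.Monic.tendsto_eval_natCast_div_eval_natCast {𝕜 : Type*} [NormedField 𝕜]
    [LinearOrder 𝕜] [IsStrictOrderedRing 𝕜] [OrderTopology 𝕜] [Archimedean 𝕜]
    {P Q : 𝕜[X]} (hP : P.Monic) (hQ : Q.Monic) (hdeg : P.degree = Q.degree) :
    Tendsto (fun n : ℕ => P.eval (n : 𝕜) / Q.eval (n : 𝕜)) atTop (𝓝 1) := by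
  have h := (div_tendsto_atTop_leadingCoeff_div_of_degree_eq P Q hdeg).comp
    tendsto_natCast_atTop_atTop
  rwa [hP.leadingCoeff, hQ.leadingCoeff, div_one] at h

theorem tendsto_sub_one_pow_three_div_sq_mul_sub_one_sub_one :
    Tendsto (fun q : ℕ => ((q : ℝ) - 1) ^ 3 / ((q : ℝ) ^ 2 * ((q : ℝ) - 1) - 1))
      atTop (𝓝 1) := by
  have hP : ((X - 1) ^ 3 : ℝ[X]).Monic := by monicity!
  have hQ : (X ^ 2 * (X - 1) - 1 : ℝ[X]).Monic := by monicity!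
  have hdeg : ((X - 1) ^ 3 : ℝ[X]).degree = (X ^ 2 * (X - 1) - 1 : ℝ[X]).degree := by
    rw [show ((X - 1) ^ 3 : ℝ[X]).degree = 3 by compute_degree!,
      show (X ^ 2 * (X - 1) - 1 : ℝ[X]).degree = 3 by compute_degree!]
  simpa using hP.tendsto_eval_natCast_div_eval_natCast hQ hdeg

/-- For QCSS parameters `(M, K, N, θ) = (q², q, q−1, q)`, the ratio `θ/θ_opt`
tends to `1` as `q → ∞`:
`lim_{q→∞} q / (q · √((q−1)³ / (q²(q−1) − 1))) = 1`. -/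
theorem qcss_ratio_tendsto_one :
    Tendsto (fun q : ℕ =>
        (q : ℝ) / ((q : ℝ) *
          Real.sqrt (((q : ℝ) - 1) ^ 3 / ((q : ℝ) ^ 2 * ((q : ℝ) - 1) - 1))))
      atTop (nhds 1) := by
  have hlim := tendsto_sub_one_pow_three_div_sq_mul_sub_one_sub_one.sqrt.inv₀ (by norm_num)
  rw [Real.sqrt_one, inv_one] at hlim
  refine hlim.congr' ?_
  filter_upwards [eventually_ne_atTop 0] with q hq
  rw [div_mul_eq_div_div, div_self (Nat.cast_ne_zero.mpr hq), one_div]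
end
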